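/- Let L be a positive even integer and let h : ℤ → ℝ satisfy h_l = 0 for l < 0 and for l ≥ L, and ∑_{l∈ℤ} h_l h_{l+2k} = (1/2)·δ_{k,0} for every integer k; define g : ℤ → ℝ by g_l = (−1)^{l+1} h_{L−1−l}. Let T be a positive integer and y : ℤ/Tℤ → ℝ, and define the circularly filtered series W_{m,n,t} = ∑_{l∈ℤ} v_{m,n,l} y_{t−(l mod T)} for t ∈ ℤ/Tℤ. Then the MODWPT preserves energy at every scale m ≥ 1: ∑_{n=0}^{2^m−1} ∑_{t∈ℤ/Tℤ} W_{m,n,t}² = ∑_{t∈ℤ/Tℤ} y_t². Consequently, if ∑_t y_t² ≠ 0, the empirical wavelet variance ratios ξ̂_{m,n,T} = (∑_t W_{m,n,t}²)/(∑_t y_t²) satisfy ∑_{n=0}^{2^m−1} ξ̂_{m,n,T} = 1. -/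

import Mathlib

/-!
The filters `g` and `h` are power complementary: their autocorrelations add up to the unit
impulse. Indeed, for the quadrature mirror `g` the autocorrelation is that of `h` twisted by
`(-1)^d`, so odd lags cancel and even lags are given by the orthogonality of `h`. Filtering a
series `x` on a finite group at any stride, the energy of the output is
`∑_d autocorr f d * circAutocorr x (d • stride)`, so for a power complementary pair the two
output energies add up to `circAutocorr x 0 = ∑ x²`. The level-`(m+1)` packets `2p` and `2p+1`
are this pair, upsampled by `2^m`, applied to packet `p` of level `m`; induction on `m` gives
energy preservation, and the variance ratios sum to `1` after dividing by `∑ y²`.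
-/

/-- Filter selector `u_n`: equals `g` if `n mod 4 ∈ {0,3}` and `h` if `n mod 4 ∈ {1,2}`. -/
noncomputable def uF (g h : ℤ → ℝ) (n : ℕ) : ℤ → ℝ :=
  fun l => if n % 4 = 0 ∨ n % 4 = 3 then g l else h l

/-- MODWPT wavelet packet filters `v_{m,n}`, defined recursively by `v_{1,0} = g`,
`v_{1,1} = h`, and `v_{m,n,l} = ∑_k u_{n,k} v_{m-1, ⌊n/2⌋, l - 2^(m-1) k}`. -/
noncomputable def wp (g h : ℤ → ℝ) : ℕ → ℕ → ℤ → ℝ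
  | 0, _, _ => 0
  | 1, n, l => if n = 0 then g l else h l
  | (m + 2), n, l => ∑ᶠ k : ℤ, uF g h n k * wp g h (m + 1) (n / 2) (l - 2 ^ (m + 1) * k)

open Function Finset

theorem Finset.sum_range_two_mul {M : Type*} [AddCommMonoid M] (f : ℕ → M) (N : ℕ) :
    ∑ n ∈ range (2 * N), f n = ∑ p ∈ range N, (f (2 * p) + f (2 * p + 1)) := by
  induction N with
  | zero => simp
  | succ N ih =>
    rw [Nat.mul_succ, sum_range_succ, sum_range_succ, ih, sum_range_succ, add_assoc]

noncomputable section

def autocorr (f : ℤ → ℝ) (d : ℤ) : ℝ := ∑ᶠ l, f l * f (l + d)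

def stridedConv (f : ℤ → ℝ) (s : ℤ) (w : ℤ → ℝ) (l : ℤ) : ℝ := ∑ᶠ k, f k * w (l - s * k)

-- Equivalently, `|F₁(ω)|² + |F₂(ω)|² = 1` for the frequency responses `F₁`, `F₂`.
structure PowerComplementary (f₁ f₂ : ℤ → ℝ) : Prop where
  hasFiniteSupport_left : f₁.HasFiniteSupport
  hasFiniteSupport_right : f₂.HasFiniteSupport
  autocorr_add : ∀ d, autocorr f₁ d + autocorr f₂ d = if d = 0 then 1 else 0

theorem PowerComplementary.symm {f₁ f₂ : ℤ → ℝ} (hpc : PowerComplementary f₁ f₂) :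
    PowerComplementary f₂ f₁ :=
  ⟨hpc.2, hpc.1, fun d => add_comm (autocorr f₂ d) _ ▸ hpc.3 d⟩

theorem Function.HasFiniteSupport.autocorr {f : ℤ → ℝ} (hf : f.HasFiniteSupport) :
    (autocorr f).HasFiniteSupport :=
  (Set.Finite.sub hf hf).subset fun d hd => by
    obtain ⟨l, hl⟩ : ∃ l, f l * f (l + d) ≠ 0 := by
      by_contra! h
      exact hd (finsum_eq_zero_of_forall_eq_zero h)
    exact ⟨l + d, right_ne_zero_of_mul hl, l, left_ne_zero_of_mul hl, add_sub_cancel_left l d⟩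

theorem Function.HasFiniteSupport.stridedConv {f w : ℤ → ℝ} (hf : f.HasFiniteSupport)
    (hw : w.HasFiniteSupport) (s : ℤ) : (stridedConv f s w).HasFiniteSupport :=
  (hf.image2 (fun k j => s * k + j) hw).subset fun l hl => by
    obtain ⟨k, hk⟩ : ∃ k, f k * w (l - s * k) ≠ 0 := by
      by_contra! h
      exact hl (finsum_eq_zero_of_forall_eq_zero h)
    exact ⟨k, left_ne_zero_of_mul hk, l - s * k, right_ne_zero_of_mul hk, add_sub_cancel _ _⟩

theorem autocorr_eq_neg_one_zpow_mul {g h : ℤ → ℝ} (N : ℤ)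
    (hg : ∀ l, g l = (-1) ^ (l + 1) * h (N - l)) (d : ℤ) :
    autocorr g d = (-1) ^ d * autocorr h d := by
  rw [autocorr, autocorr, mul_finsum,
    ← finsum_comp_equiv (Equiv.subLeft (N - d)) (f := fun l => g l * g (l + d))]
  refine finsum_congr fun l => ?_
  have hsign : (-1 : ℝ) ^ (N - d - l + 1) * (-1) ^ (N - d - l + d + 1) = (-1) ^ d := by
    rw [← zpow_add₀ (by norm_num), show N - d - l + 1 + (N - d - l + d + 1)
      = 2 * (N - d - l + 1) + d by ring, zpow_add₀ (by norm_num),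
      (even_two_mul _).neg_one_zpow, one_mul]
  rw [Equiv.subLeft_apply, hg, hg, show N - (N - d - l) = l + d by ring,
    show N - (N - d - l + d) = l by ring, ← hsign]
  ring

theorem powerComplementary_of_autocorr_two_mul {g h : ℤ → ℝ} (hh : h.HasFiniteSupport) (N : ℤ)
    (hg : ∀ l, g l = (-1) ^ (l + 1) * h (N - l))
    (horth : ∀ k, autocorr h (2 * k) = 1 / 2 * if k = 0 then 1 else 0) :
    PowerComplementary g h where
  hasFiniteSupport_left := by
    rw [show g = (fun l : ℤ => (-1 : ℝ) ^ (l + 1)) * (h ∘ (N - ·)) from funext hg]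
    exact (hh.comp_of_injective (sub_right_injective)).mul_right _
  hasFiniteSupport_right := hh
  autocorr_add d := by
    rw [autocorr_eq_neg_one_zpow_mul N hg]
    obtain ⟨k, rfl | rfl⟩ := Int.even_or_odd' d
    · rw [(even_two_mul k).neg_one_zpow, horth]
      by_cases hk : k = 0 <;> norm_num [hk]
    · rw [(odd_two_mul_add_one k).neg_one_zpow]
      simp only [neg_one_mul, neg_add_cancel]
      rw [if_neg (by omega)]

theorem PowerComplementary.hasFiniteSupport_uF {g h : ℤ → ℝ} (hpc : PowerComplementary g h)
    (n : ℕ) : (uF g h n).HasFiniteSupport := by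
  unfold uF
  split_ifs
  exacts [hpc.1, hpc.2]

theorem PowerComplementary.uF_two_mul {g h : ℤ → ℝ} (hpc : PowerComplementary g h) (p : ℕ) :
    PowerComplementary (uF g h (2 * p)) (uF g h (2 * p + 1)) := by
  rcases Nat.even_or_odd p with ⟨q, rfl⟩ | ⟨q, rfl⟩
  · rwa [show uF g h (2 * (q + q)) = g from funext fun l => if_pos (by omega),
      show uF g h (2 * (q + q) + 1) = h from funext fun l => if_neg (by omega)]
  · rw [show uF g h (2 * (2 * q + 1)) = h from funext fun l => if_neg (by omega),
      show uF g h (2 * (2 * q + 1) + 1) = g from funext fun l => if_pos (by omega)]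
    exact hpc.symm

theorem wp_add_two (g h : ℤ → ℝ) (m n : ℕ) :
    wp g h (m + 2) n = stridedConv (uF g h n) (2 ^ (m + 1)) (wp g h (m + 1) (n / 2)) :=
  rfl

theorem PowerComplementary.hasFiniteSupport_wp {g h : ℤ → ℝ} (hpc : PowerComplementary g h) :
    ∀ m n, (wp g h m n).HasFiniteSupport
  | 0, _ => by simp [wp, HasFiniteSupport]
  | 1, n => by
    show HasFiniteSupport fun l => if n = 0 then g l else h l
    split_ifs
    exacts [hpc.1, hpc.2]
  | m + 2, n => by
    rw [wp_add_two]
    exact (hpc.hasFiniteSupport_uF n).stridedConv (hpc.hasFiniteSupport_wp (m + 1) (n / 2)) _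

theorem finsum_autocorr_mul {f : ℤ → ℝ} {S : Finset ℤ} (hS : support f ⊆ S) (c : ℤ → ℝ) :
    ∑ᶠ d, autocorr f d * c d = ∑ k ∈ S, ∑ k' ∈ S, f k * f k' * c (k' - k) := by
  have hf : f.HasFiniteSupport := S.finite_toSet.subset hS
  calc ∑ᶠ d, autocorr f d * c d = ∑ᶠ d, ∑ k ∈ S, f k * f (k + d) * c d := by
        refine finsum_congr fun d => ?_
        rw [autocorr, finsum_eq_sum_of_support_subset _ ((support_mul_subset_left _ _).trans hS),
          sum_mul]
    _ = ∑ k ∈ S, ∑ᶠ d, f k * f (k + d) * c d := by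
        refine (sum_finsum_comm _ _ fun k _ => ?_).symm
        exact ((hf.comp_of_injective (add_right_injective k)).mul_right fun _ => f k).mul_left c
    _ = ∑ k ∈ S, ∑ᶠ k', f k * f k' * c (k' - k) := by
        refine sum_congr rfl fun k _ => ?_
        rw [← finsum_comp_equiv (Equiv.addLeft k) (f := fun k' => f k * f k' * c (k' - k))]
        simp only [Equiv.coe_addLeft, add_sub_cancel_left]
    _ = ∑ k ∈ S, ∑ k' ∈ S, f k * f k' * c (k' - k) :=
        sum_congr rfl fun k _ => finsum_eq_sum_of_support_subset _
          (((support_mul_subset_left _ _).trans (support_mul_subset_right _ _)).trans hS)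

section Circular

variable {G : Type*} [AddCommGroup G]

def stridedFilter (f : ℤ → ℝ) (a : G) (x : G → ℝ) (t : G) : ℝ := ∑ᶠ k : ℤ, f k * x (t - k • a)

theorem stridedFilter_stridedConv {f w : ℤ → ℝ} (hf : f.HasFiniteSupport)
    (hw : w.HasFiniteSupport) (s : ℤ) (a : G) (x : G → ℝ) :
    stridedFilter (stridedConv f s w) a x = stridedFilter f (s • a) (stridedFilter w a x) := by
  funext t
  have hS : support f ⊆ hf.toFinset := hf.coe_toFinset.symm.subset
  calc stridedFilter (stridedConv f s w) a x t
      = ∑ᶠ l, ∑ k ∈ hf.toFinset, f k * (w (l - s * k) * x (t - l • a)) := by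
        refine finsum_congr fun l => ?_
        rw [stridedConv, finsum_eq_sum_of_support_subset _
          ((support_mul_subset_left _ _).trans hS), sum_mul]
        simp_rw [mul_assoc]
    _ = ∑ k ∈ hf.toFinset, f k * ∑ᶠ l, w (l - s * k) * x (t - l • a) := by
        rw [← sum_finsum_comm _ _ fun k _ => ?_]
        · simp_rw [mul_finsum]
        · exact ((hw.comp_of_injective (sub_left_injective (b := s * k))).mul_left _).mul_right _
    _ = ∑ k ∈ hf.toFinset, f k * stridedFilter w a x (t - k • s • a) := by
        refine sum_congr rfl fun k _ => ?_
        rw [stridedFilter, ← finsum_comp_equiv (Equiv.addRight (s * k))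
          (f := fun l => w (l - s * k) * x (t - l • a))]
        simp only [Equiv.coe_addRight, add_sub_cancel_right, add_zsmul, ← mul_zsmul']
        congr! 3
        rw [sub_sub, add_comm]
    _ = stridedFilter f (s • a) (stridedFilter w a x) t :=
        (finsum_eq_sum_of_support_subset _ ((support_mul_subset_left _ _).trans hS)).symm

variable [Fintype G]

def circAutocorr (x : G → ℝ) (a : G) : ℝ := ∑ t, x t * x (t - a)

theorem sum_mul_eq_circAutocorr (x : G → ℝ) (a : G) (k k' : ℤ) :
    ∑ t, x (t - k • a) * x (t - k' • a) = circAutocorr x ((k' - k) • a) := by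
  refine Fintype.sum_equiv (Equiv.subRight (k • a)) _ _ fun t => ?_
  simp only [Equiv.subRight_apply, sub_zsmul]
  congr 2
  abel

theorem sum_stridedFilter_sq {f : ℤ → ℝ} (hf : f.HasFiniteSupport) (a : G) (x : G → ℝ) :
    ∑ t, stridedFilter f a x t ^ 2 = ∑ᶠ d, autocorr f d * circAutocorr x (d • a) := by
  have hS : support f ⊆ hf.toFinset := hf.coe_toFinset.symm.subset
  rw [finsum_autocorr_mul hS]
  calc ∑ t, stridedFilter f a x t ^ 2
      = ∑ t, ∑ k ∈ hf.toFinset, ∑ k' ∈ hf.toFinset,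
          f k * f k' * (x (t - k • a) * x (t - k' • a)) := by
        refine sum_congr rfl fun t _ => ?_
        rw [stridedFilter, finsum_eq_sum_of_support_subset _
          ((support_mul_subset_left _ _).trans hS), sq, sum_mul_sum]
        exact sum_congr rfl fun k _ => sum_congr rfl fun k' _ => by ring
    _ = ∑ k ∈ hf.toFinset, ∑ k' ∈ hf.toFinset,
          f k * f k' * ∑ t, x (t - k • a) * x (t - k' • a) := by
        rw [sum_comm]
        refine sum_congr rfl fun k _ => ?_
        rw [sum_comm]
        simp_rw [mul_sum]
    _ = _ := by simp_rw [sum_mul_eq_circAutocorr]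

theorem PowerComplementary.sum_stridedFilter_sq_add {f₁ f₂ : ℤ → ℝ}
    (hpc : PowerComplementary f₁ f₂) (a : G) (x : G → ℝ) :
    ∑ t, stridedFilter f₁ a x t ^ 2 + ∑ t, stridedFilter f₂ a x t ^ 2 = ∑ t, x t ^ 2 := by
  rw [sum_stridedFilter_sq hpc.1, sum_stridedFilter_sq hpc.2,
    ← finsum_add_distrib (f := fun d => autocorr f₁ d * circAutocorr x (d • a))
      (g := fun d => autocorr f₂ d * circAutocorr x (d • a))
      (hpc.1.autocorr.mul_left _) (hpc.2.autocorr.mul_left _)]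
  simp_rw [← add_mul, hpc.autocorr_add]
  rw [finsum_eq_single _ 0 fun d hd => by rw [if_neg hd, zero_mul]]
  simp [circAutocorr, sq]

theorem PowerComplementary.sum_sum_stridedFilter_wp_sq {g h : ℤ → ℝ}
    (hpc : PowerComplementary g h) (a : G) (x : G → ℝ) {m : ℕ} (hm : 1 ≤ m) :
    ∑ n ∈ range (2 ^ m), ∑ t, stridedFilter (wp g h m n) a x t ^ 2 = ∑ t, x t ^ 2 := by
  induction m, hm using Nat.le_induction with
  | base => simpa [sum_range_succ, wp] using hpc.sum_stridedFilter_sq_add a x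
  | succ m hm ih =>
    obtain ⟨m, rfl⟩ := Nat.exists_eq_add_of_le' hm
    rw [pow_succ', sum_range_two_mul, ← ih]
    refine sum_congr rfl fun p _ => ?_
    have hdiv : 2 * p / 2 = p ∧ (2 * p + 1) / 2 = p := by omega
    simp only [wp_add_two, stridedFilter_stridedConv (hpc.hasFiniteSupport_uF _)
      (hpc.hasFiniteSupport_wp _ _), hdiv]
    exact (hpc.uF_two_mul p).sum_stridedFilter_sq_add _ _

end Circular

end

theorem stmt8_general (L : ℕ) (h : ℤ → ℝ)
    (hsupp : ∀ l : ℤ, (l < 0 ∨ (L : ℤ) ≤ l) → h l = 0)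
    (horth_h : ∀ k : ℤ,
      ∑ᶠ l : ℤ, h l * h (l + 2 * k) = (1 / 2) * (if k = 0 then 1 else 0))
    (g : ℤ → ℝ) (hgdef : ∀ l : ℤ, g l = (-1 : ℝ) ^ (l + 1) * h ((L : ℤ) - 1 - l))
    (T : ℕ) [NeZero T] (y : ZMod T → ℝ) (m : ℕ) (hm : 1 ≤ m) :
    (∑ n ∈ Finset.range (2 ^ m), ∑ t : ZMod T,
        (∑ᶠ l : ℤ, wp g h m n l * y (t - (l : ZMod T))) ^ 2
      = ∑ t : ZMod T, (y t) ^ 2)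
    ∧ ((∑ t : ZMod T, (y t) ^ 2) ≠ 0 →
        ∑ n ∈ Finset.range (2 ^ m),
          (∑ t : ZMod T, (∑ᶠ l : ℤ, wp g h m n l * y (t - (l : ZMod T))) ^ 2)
            / (∑ t : ZMod T, (y t) ^ 2) = 1) := by
  have hh : h.HasFiniteSupport := (Set.finite_Ico (0 : ℤ) L).subset fun l hl => by
    by_contra hout
    exact hl (hsupp l (by rw [Set.mem_Ico] at hout; omega))
  have hpc : PowerComplementary g h := powerComplementary_of_autocorr_two_mul hh _ hgdef horth_h
  have henergy : ∑ n ∈ range (2 ^ m), ∑ t : ZMod T,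
      (∑ᶠ l : ℤ, wp g h m n l * y (t - (l : ZMod T))) ^ 2 = ∑ t, y t ^ 2 := by
    simpa only [stridedFilter, zsmul_one] using hpc.sum_sum_stridedFilter_wp_sq 1 y hm
  refine ⟨henergy, fun hne => ?_⟩
  rw [← sum_div, henergy, div_self hne]

/-- Under the wavelet-filter conditions, the MODWPT applied circularly to
a series `y : ℤ/Tℤ → ℝ` preserves energy at every scale `m ≥ 1`:
`∑_{n=0}^{2^m-1} ∑_t W_{m,n,t}² = ∑_t y_t²`; consequently, if `∑_t y_t² ≠ 0`,
the empirical wavelet variance ratios sum to 1. -/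
theorem stmt8 (L : ℕ) (hLpos : 0 < L) (hLeven : Even L)
    (h : ℤ → ℝ)
    (hsupp : ∀ l : ℤ, (l < 0 ∨ (L : ℤ) ≤ l) → h l = 0)
    (horth_h : ∀ k : ℤ,
      ∑ᶠ l : ℤ, h l * h (l + 2 * k) = (1 / 2) * (if k = 0 then 1 else 0))
    (g : ℤ → ℝ) (hgdef : ∀ l : ℤ, g l = (-1 : ℝ) ^ (l + 1) * h ((L : ℤ) - 1 - l))
    (T : ℕ) [NeZero T] (y : ZMod T → ℝ) (m : ℕ) (hm : 1 ≤ m) :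
    (∑ n ∈ Finset.range (2 ^ m), ∑ t : ZMod T,
        (∑ᶠ l : ℤ, wp g h m n l * y (t - (l : ZMod T))) ^ 2
      = ∑ t : ZMod T, (y t) ^ 2)
    ∧ ((∑ t : ZMod T, (y t) ^ 2) ≠ 0 →
        ∑ n ∈ Finset.range (2 ^ m),
          (∑ t : ZMod T, (∑ᶠ l : ℤ, wp g h m n l * y (t - (l : ZMod T))) ^ 2)
            / (∑ t : ZMod T, (y t) ^ 2) = 1) :=
  stmt8_general L h hsupp horth_h g hgdef T y m hm
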